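/- arXiv:0907.2837 — 3 statements merged into one kernel-verified Lean document; each statement's English description precedes it below -/
import Mathlib

section
/- The fermionic Hamiltonian with periodic boundary conditions satisfies the lattice continuity equation: for every site x in ℤ/LℤL, [H, ρₓ] = −i(Jₓ − J_{x−1}), where ρₓ = a⁺ₓ a⁻ₓ and Jₓ = (1/(2i))(a⁺_{x+1} a⁻ₓ − a⁺ₓ a⁻_{x+1}). -/
open Complex

/-- The local density `ρₓ = a⁺ₓ a⁻ₓ`. -/
noncomputable def rho {L n : ℕ} (ap am : ZMod L → Matrix (Fin n) (Fin n) ℂ) (x : ZMod L) :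
    Matrix (Fin n) (Fin n) ℂ :=
  ap x * am x

/-- The fermionic Hamiltonian with periodic boundary conditions:
`H = -½ Σₓ (a⁺ₓ a⁻ₓ₊₁ + a⁺ₓ₊₁ a⁻ₓ) - h Σₓ (ρₓ - ½) + λ Σₓᵧ v(x-y)(ρₓ - ½)(ρᵧ - ½)`. -/
noncomputable def hamiltonian {L n : ℕ} [NeZero L] (h lam : ℝ) (v : ℤ → ℝ)
    (ap am : ZMod L → Matrix (Fin n) (Fin n) ℂ) : Matrix (Fin n) (Fin n) ℂ :=
  -((1 / 2 : ℂ) • ∑ x : ZMod L, (ap x * am (x + 1) + ap (x + 1) * am x))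
    - (h : ℂ) • ∑ x : ZMod L, (rho ap am x - (1 / 2 : ℂ) • 1)
    + (lam : ℂ) • ∑ x : ZMod L, ∑ y : ZMod L,
        ((v ((x.val : ℤ) - (y.val : ℤ)) : ℝ) : ℂ) •
          ((rho ap am x - (1 / 2 : ℂ) • 1) * (rho ap am y - (1 / 2 : ℂ) • 1))

/-- The lattice current `Jₓ = (1/2i)(a⁺ₓ₊₁ a⁻ₓ - a⁺ₓ a⁻ₓ₊₁)`. -/
noncomputable def latticeCurrent {L n : ℕ} (ap am : ZMod L → Matrix (Fin n) (Fin n) ℂ)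
    (x : ZMod L) : Matrix (Fin n) (Fin n) ℂ :=
  (1 / (2 * Complex.I)) • (ap (x + 1) * am x - ap x * am (x + 1))

/-!
The field and interaction terms of `H` are polynomials in the densities `ρ_y`, which commute
with each other, so only the hopping term contributes to `[H, ρₓ]`. For a single bond the
anticommutation relations give `[a⁺_a a⁻_b, ρ_c] = δ_{bc} a⁺_a a⁻_c - δ_{ac} a⁺_c a⁻_b`; summed
over all bonds this leaves exactly the four bond operators at `x`, which make up
`-i (Jₓ - J_{x-1})`.
-/

attribute [local instance] LieRing.ofAssociativeRing

structure IsCAR {ι A : Type*} [DecidableEq ι] [Ring A] (ap am : ι → A) : Prop where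
  anticomm_am_ap : ∀ x y, am x * ap y + ap y * am x = if x = y then 1 else 0
  anticomm_ap_ap : ∀ x y, ap x * ap y + ap y * ap x = 0
  anticomm_am_am : ∀ x y, am x * am y + am y * am x = 0

theorem lie_mul_mul_of_anticommute {A : Type*} [Ring A] {P N Q M : A}
    (hPQ : P * Q + Q * P = 0) (hNM : N * M + M * N = 0) :
    ⁅P * N, Q * M⁆ = P * (N * Q + Q * N) * M - Q * (P * M + M * P) * N := by
  have key : ⁅P * N, Q * M⁆ - (P * (N * Q + Q * N) * M - Q * (P * M + M * P) * N)
      = Q * P * (N * M + M * N) - (P * Q + Q * P) * N * M := by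
    rw [Ring.lie_def]; noncomm_ring
  rwa [hPQ, hNM, mul_zero, zero_mul, zero_mul, sub_zero, sub_eq_zero] at key

namespace IsCAR

variable {ι A : Type*} [DecidableEq ι] [Ring A] {ap am : ι → A}

theorem lie_hop_density (hcar : IsCAR ap am) (a b c : ι) :
    ⁅ap a * am b, ap c * am c⁆
      = (if b = c then ap a * am c else 0) - (if a = c then ap c * am b else 0) := by
  rw [lie_mul_mul_of_anticommute (hcar.anticomm_ap_ap a c) (hcar.anticomm_am_am b c),
    hcar.anticomm_am_ap, add_comm, hcar.anticomm_am_ap]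
  simp only [@eq_comm _ c a]
  split_ifs <;> simp only [mul_one, mul_zero, zero_mul, sub_zero, zero_sub]

theorem commute_density (hcar : IsCAR ap am) (x y : ι) :
    Commute (ap x * am x) (ap y * am y) := by
  rw [commute_iff_lie_eq, hcar.lie_hop_density]
  split_ifs with h <;> simp [h]

theorem lie_sum_hop_density [AddGroup ι] [Fintype ι] (hcar : IsCAR ap am) (e x : ι) :
    ⁅∑ y, (ap y * am (y + e) + ap (y + e) * am y), ap x * am x⁆
      = ap (x - e) * am x - ap x * am (x + e) + (ap (x + e) * am x - ap x * am (x - e)) := by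
  simp only [sum_lie, add_lie, hcar.lie_hop_density, Finset.sum_add_distrib,
    Finset.sum_sub_distrib, ← eq_sub_iff_add_eq (c := e), Finset.sum_ite_eq', Finset.mem_univ,
    if_true]

end IsCAR

theorem neg_I_smul_latticeCurrent_sub {L n : ℕ} (ap am : ZMod L → Matrix (Fin n) (Fin n) ℂ)
    (x : ZMod L) :
    (-Complex.I) • (latticeCurrent ap am x - latticeCurrent ap am (x - 1))
      = -(1 / 2 : ℂ) • (ap (x - 1) * am x - ap x * am (x + 1)
          + (ap (x + 1) * am x - ap x * am (x - 1))) := by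
  have hI : -Complex.I * (1 / (2 * Complex.I)) = -(1 / 2 : ℂ) := by field_simp
  rw [latticeCurrent, latticeCurrent, sub_add_cancel, ← smul_sub, smul_smul, hI]
  congr 1
  abel

theorem lattice_continuity_equation_general (L n : ℕ) [NeZero L] (h lam : ℝ)
    (v : ℤ → ℝ)
    (ap am : ZMod L → Matrix (Fin n) (Fin n) ℂ)
    (hcar1 : ∀ x y, am x * ap y + ap y * am x = if x = y then 1 else 0)
    (hcar2 : ∀ x y, ap x * ap y + ap y * ap x = 0)
    (hcar3 : ∀ x y, am x * am y + am y * am x = 0)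
    (x : ZMod L) :
    hamiltonian h lam v ap am * rho ap am x - rho ap am x * hamiltonian h lam v ap am
      = (-Complex.I) • (latticeCurrent ap am x - latticeCurrent ap am (x - 1)) := by
  have hcar : IsCAR ap am := ⟨hcar1, hcar2, hcar3⟩
  have hcentered : ∀ y, Commute (rho ap am y - (1 / 2 : ℂ) • 1) (rho ap am x) := fun y =>
    (hcar.commute_density y x).sub_left ((Commute.one_left _).smul_left _)
  have hfield : ⁅(h : ℂ) • ∑ y : ZMod L, (rho ap am y - (1 / 2 : ℂ) • 1), rho ap am x⁆ = 0 :=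
    ((Commute.sum_left _ _ _ fun y _ => hcentered y).smul_left _).lie_eq
  have hinteraction : ⁅(lam : ℂ) • ∑ y : ZMod L, ∑ z : ZMod L,
      ((v ((y.val : ℤ) - (z.val : ℤ)) : ℝ) : ℂ) •
        ((rho ap am y - (1 / 2 : ℂ) • 1) * (rho ap am z - (1 / 2 : ℂ) • 1)), rho ap am x⁆ = 0 :=
    (Commute.smul_left (Commute.sum_left _ _ _ fun y _ => Commute.sum_left _ _ _ fun z _ =>
      ((hcentered y).mul_left (hcentered z)).smul_left _) _).lie_eq
  rw [← Ring.lie_def, hamiltonian, add_lie, sub_lie, hfield, hinteraction, neg_lie, smul_lie,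
    rho, hcar.lie_sum_hop_density, neg_I_smul_latticeCurrent_sub,
    sub_zero, add_zero, neg_smul]

/-- Lattice continuity equation: for operators satisfying the canonical
anticommutation relations, the Hamiltonian `H` with periodic boundary conditions satisfies
`[H, ρₓ] = -i (Jₓ - J_{x-1})` for every site `x ∈ ℤ/Lℤ`. -/
theorem lattice_continuity_equation (L n : ℕ) [NeZero L] (hL : 2 ≤ L) (h lam : ℝ)
    (v : ℤ → ℝ) (hv : ∀ m, v (-m) = v m)
    (ap am : ZMod L → Matrix (Fin n) (Fin n) ℂ)
    (hcar1 : ∀ x y, am x * ap y + ap y * am x = if x = y then 1 else 0)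
    (hcar2 : ∀ x y, ap x * ap y + ap y * ap x = 0)
    (hcar3 : ∀ x y, am x * am y + am y * am x = 0)
    (x : ZMod L) :
    hamiltonian h lam v ap am * rho ap am x - rho ap am x * hamiltonian h lam v ap am
      = (-Complex.I) • (latticeCurrent ap am x - latticeCurrent ap am (x - 1)) :=
  lattice_continuity_equation_general L n h lam v ap am hcar1 hcar2 hcar3 x
end

section
/- For every real e₀ ≠ 0, the function k₀ ↦ 1/(−ik₀ + e₀)² is Lebesgue integrable on ℝ and ∫_{ℝ} dk₀ /(−ik₀ + e₀)² = 0. -/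
open Complex MeasureTheory Filter Topology Bornology

/-!
Since `-I * k₀ + e₀ = -I * (k₀ - z)` with `z = -(e₀ * I)` off the real axis, the integrand is
`-1 / (k₀ - z)²`. This is dominated by a multiple of `1 / (1 + (k₀ - Re z)²)`, and it is the
derivative of `1 / (k₀ - z)`, which tends to `0` at both ends of the real line.
-/

theorem Complex.ofReal_sub_ne_zero_of_im_ne_zero {z : ℂ} (hz : z.im ≠ 0) (k : ℝ) :
    (k : ℂ) - z ≠ 0 :=
  fun h => hz (by simpa using congrArg im h)

theorem Complex.norm_ofReal_sub_sq (k : ℝ) (z : ℂ) :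
    ‖(k : ℂ) - z‖ ^ 2 = (k - z.re) ^ 2 + z.im ^ 2 := by
  simp only [Complex.sq_norm, normSq_apply, sub_re, ofReal_re, sub_im, ofReal_im, zero_sub, mul_neg,
    neg_mul, neg_neg]
  ring

theorem integrable_inv_ofReal_sub_sq {z : ℂ} (hz : z.im ≠ 0) :
    Integrable fun k : ℝ => (((k : ℂ) - z) ^ 2)⁻¹ := by
  set m := min 1 (z.im ^ 2)
  have hm : 0 < m := lt_min one_pos (by positivity)
  refine ((integrable_inv_one_add_sq.comp_sub_right z.re).const_mul m⁻¹).mono' ?_ ?_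
  · exact (Continuous.inv₀ (by fun_prop) fun k =>
      pow_ne_zero 2 (ofReal_sub_ne_zero_of_im_ne_zero hz k)).aestronglyMeasurable
  · refine .of_forall fun k => ?_
    have hlower : m * (1 + (k - z.re) ^ 2) ≤ ‖(k : ℂ) - z‖ ^ 2 := by
      rw [Complex.norm_ofReal_sub_sq]
      nlinarith [min_le_left 1 (z.im ^ 2), min_le_right 1 (z.im ^ 2), sq_nonneg (k - z.re)]
    calc ‖(((k : ℂ) - z) ^ 2)⁻¹‖ = (‖(k : ℂ) - z‖ ^ 2)⁻¹ := by rw [norm_inv, norm_pow]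
      _ ≤ (m * (1 + (k - z.re) ^ 2))⁻¹ := inv_anti₀ (by positivity) hlower
      _ = m⁻¹ * (1 + (k - z.re) ^ 2)⁻¹ := mul_inv _ _

theorem integral_inv_ofReal_sub_sq {z : ℂ} (hz : z.im ≠ 0) :
    ∫ k : ℝ, (((k : ℂ) - z) ^ 2)⁻¹ = 0 := by
  have hderiv (k : ℝ) :
      HasDerivAt (fun k : ℝ => -((k : ℂ) - z)⁻¹) (((k : ℂ) - z) ^ 2)⁻¹ k := by
    refine (((hasDerivAt_id k).ofReal_comp.sub_const z).fun_inv
      (ofReal_sub_ne_zero_of_im_ne_zero hz k)).fun_neg.congr_deriv ?_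
    simp [neg_div]
  have hlim {l : Filter ℝ} (hl : Tendsto ((↑) : ℝ → ℂ) l (cobounded ℂ)) :
      Tendsto (fun k : ℝ => -((k : ℂ) - z)⁻¹) l (𝓝 0) := by
    simpa using (tendsto_inv₀_cobounded.comp ((tendsto_sub_const_cobounded z).comp hl)).neg
  simpa using integral_of_hasDerivAt_of_tendsto hderiv (integrable_inv_ofReal_sub_sq hz)
    (hlim (RCLike.tendsto_ofReal_atBot_cobounded ℂ)) (hlim (RCLike.tendsto_ofReal_atTop_cobounded ℂ))

/-- For every real `e₀ ≠ 0`, the function `k₀ ↦ 1/(-i k₀ + e₀)²` is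
Lebesgue integrable on `ℝ` and its integral over `ℝ` vanishes. -/
theorem integral_inv_sq_symbol (e₀ : ℝ) (he : e₀ ≠ 0) :
    Integrable (fun k₀ : ℝ => 1 / (-I * (k₀ : ℂ) + (e₀ : ℂ)) ^ 2) ∧
    ∫ k₀ : ℝ, 1 / (-I * (k₀ : ℂ) + (e₀ : ℂ)) ^ 2 = 0 := by
  have him : (-(e₀ * I)).im ≠ 0 := by simpa using he
  have hsymbol : (fun k₀ : ℝ => 1 / (-I * (k₀ : ℂ) + (e₀ : ℂ)) ^ 2) =
      fun k₀ : ℝ => -(((k₀ : ℂ) - -(e₀ * I)) ^ 2)⁻¹ := by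
    funext k₀
    rw [one_div, ← inv_neg]
    congr 1
    linear_combination ((k₀ : ℂ) ^ 2 + (e₀ : ℂ) ^ 2) * I_sq
  rw [hsymbol, integral_neg, integral_inv_ofReal_sub_sq him, neg_zero]
  exact ⟨(integrable_inv_ofReal_sub_sq him).neg, rfl⟩
end

section
/- Vanishing of the chiral bubble at zero momentum: let v_s > 0, ω ∈ {+1,−1}, and let f : ℝ → ℝ be a bounded measurable function vanishing outside of some annulus 0 < r ≤ √(k₀² + v_s²k²) ≤ R < ∞. Define ĝ_ω(k, k₀) = f(√(k₀² + v_s²k²))/(−ik₀ + ω v_s k). Then ĝ_ω² is integrable on ℝ² and ∫_{ℝ²} ĝ_ω(k, k₀)² dk dk₀ = 0. -/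
open Complex MeasureTheory

/-!
The substitution `(k, k₀) ↦ (-k₀ / v, v k)` has determinant `1`, so it preserves Lebesgue
measure; it preserves `√(k₀² + v² k²)` and multiplies the denominator `-i k₀ + ω v k` by `-i ω`.
Hence it sends `ĝ_ω` to `i ω ĝ_ω` and `ĝ_ω²` to `-ĝ_ω²`, so the integral equals its own negative.
Integrability holds because `|ĝ_ω| ≤ C / r` and `ĝ_ω` vanishes outside a bounded box.
-/

theorem MeasureTheory.Integrable.of_norm_le_of_support_subset_isCompact {X E : Type*}
    [TopologicalSpace X] [MeasurableSpace X] [NormedAddCommGroup E] {μ : Measure X}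
    [IsFiniteMeasureOnCompacts μ] {F : X → E} (hF : AEStronglyMeasurable F μ) {M : ℝ}
    (hM : ∀ x, ‖F x‖ ≤ M) {K : Set X} (hK : IsCompact K) (hFK : Function.support F ⊆ K) :
    Integrable F μ :=
  (integrableOn_iff_integrable_of_support_subset hFK).1 <|
    Measure.integrableOn_of_bounded hK.measure_lt_top.ne hF (ae_of_all _ hM)

theorem MeasureTheory.MeasurePreserving.integral_eq_zero_of_comp_eq_neg {α E : Type*}
    [MeasurableSpace α] [NormedAddCommGroup E] [NormedSpace ℝ E] {μ : Measure α} {T : α → α}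
    (hT : MeasurePreserving T μ μ) (hTe : MeasurableEmbedding T) {F : α → E}
    (hF : ∀ x, F (T x) = -F x) : ∫ x, F x ∂μ = 0 := by
  have : IsAddTorsionFree E := .of_isTorsionFree ℝ E
  simp_rw [← self_eq_neg, ← integral_neg, ← hF, hT.integral_comp hTe]

theorem LinearEquiv.measurePreserving_of_abs_det_eq_one {E : Type*} [NormedAddCommGroup E]
    [NormedSpace ℝ E] [MeasurableSpace E] [BorelSpace E] [FiniteDimensional ℝ E]
    (μ : Measure E) [μ.IsAddHaarMeasure] (L : E ≃ₗ[ℝ] E)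
    (hL : |LinearMap.det (L : E →ₗ[ℝ] E)| = 1) : MeasurePreserving L μ μ := by
  have hdet : LinearMap.det (L : E →ₗ[ℝ] E) ≠ 0 := by
    intro h; simp [h] at hL
  refine ⟨L.toContinuousLinearEquiv.continuous.measurable, ?_⟩
  simpa [abs_inv, hL] using Measure.map_linearMap_addHaar_eq_smul_addHaar μ hdet

noncomputable def chiralRotation (v : ℝ) (hv : v ≠ 0) : (ℝ × ℝ) ≃ₗ[ℝ] (ℝ × ℝ) where
  toFun k := (-k.2 / v, v * k.1)
  invFun k := (k.2 / v, -(v * k.1))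
  map_add' k l := by ext <;> simp <;> ring
  map_smul' c k := by ext <;> simp <;> ring
  left_inv k := by ext <;> simp <;> field_simp
  right_inv k := by ext <;> simp <;> field_simp

@[simp]
theorem chiralRotation_apply (v : ℝ) (hv : v ≠ 0) (k : ℝ × ℝ) :
    chiralRotation v hv k = (-k.2 / v, v * k.1) := rfl

theorem det_chiralRotation (v : ℝ) (hv : v ≠ 0) :
    LinearMap.det (chiralRotation v hv : (ℝ × ℝ) →ₗ[ℝ] (ℝ × ℝ)) = 1 := by
  rw [← LinearMap.det_toMatrix (Module.Basis.finTwoProd ℝ), Matrix.det_fin_two]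
  simp [LinearMap.toMatrix_apply]
  field_simp

theorem measurePreserving_chiralRotation (v : ℝ) (hv : v ≠ 0) :
    MeasurePreserving (chiralRotation v hv) volume volume :=
  (chiralRotation v hv).measurePreserving_of_abs_det_eq_one volume
    (by rw [det_chiralRotation, abs_one])

theorem measurableEmbedding_chiralRotation (v : ℝ) (hv : v ≠ 0) :
    MeasurableEmbedding (chiralRotation v hv) :=
  (chiralRotation v hv).toContinuousLinearEquiv.toHomeomorph.measurableEmbedding

noncomputable def chiralRadius (v : ℝ) (k : ℝ × ℝ) : ℝ := √(k.2 ^ 2 + v ^ 2 * k.1 ^ 2)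

theorem abs_snd_le_chiralRadius (v : ℝ) (k : ℝ × ℝ) : |k.2| ≤ chiralRadius v k :=
  Real.abs_le_sqrt (by nlinarith)

theorem abs_mul_fst_le_chiralRadius (v : ℝ) (k : ℝ × ℝ) : |v * k.1| ≤ chiralRadius v k :=
  Real.abs_le_sqrt (by nlinarith)

noncomputable def chiralSymbol (v ω : ℝ) (k : ℝ × ℝ) : ℂ := -I * k.2 + ω * v * k.1

/-- The propagator `ĝ_ω`. -/
noncomputable def chiralPropagator (v ω : ℝ) (f : ℝ → ℝ) (k : ℝ × ℝ) : ℂ :=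
  f (chiralRadius v k) / chiralSymbol v ω k

section

variable {v ω : ℝ}

theorem chiralRadius_chiralRotation (hv : v ≠ 0) (k : ℝ × ℝ) :
    chiralRadius v (chiralRotation v hv k) = chiralRadius v k := by
  simp only [chiralRadius, chiralRotation_apply]
  congr 1
  field_simp
  ring

theorem chiralSymbol_chiralRotation (hv : v ≠ 0) (hω : ω ^ 2 = 1) (k : ℝ × ℝ) :
    chiralSymbol v ω (chiralRotation v hv k) = -I * ω * chiralSymbol v ω k := by
  have hωC : (ω : ℂ) ^ 2 = 1 := by exact_mod_cast hω
  have hvC : (v : ℂ) ≠ 0 := by exact_mod_cast hv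
  simp only [chiralSymbol, chiralRotation_apply]
  push_cast
  field_simp
  linear_combination (I * v * k.1) * hωC - (ω * k.2) * I_sq

theorem norm_chiralSymbol (hω : ω ^ 2 = 1) (k : ℝ × ℝ) :
    ‖chiralSymbol v ω k‖ = chiralRadius v k := by
  rw [chiralRadius, ← Real.sqrt_sq (norm_nonneg _), Complex.sq_norm, Complex.normSq_apply]
  congr 1
  simp [chiralSymbol]
  linear_combination (v * k.1) ^ 2 * hω

theorem chiralPropagator_chiralRotation (f : ℝ → ℝ) (hv : v ≠ 0) (hω : ω ^ 2 = 1)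
    (k : ℝ × ℝ) :
    chiralPropagator v ω f (chiralRotation v hv k) = I * ω * chiralPropagator v ω f k := by
  have hinv : (-I * ω)⁻¹ = I * ω := by
    refine inv_eq_of_mul_eq_one_right ?_
    linear_combination -(ω : ℂ) ^ 2 * I_sq + (by exact_mod_cast hω : (ω : ℂ) ^ 2 = 1)
  rw [chiralPropagator, chiralPropagator, chiralRadius_chiralRotation,
    chiralSymbol_chiralRotation hv hω, div_mul_eq_div_div_swap, div_eq_mul_inv _ (-I * ω),
    hinv, mul_comm]

theorem sq_chiralPropagator_chiralRotation (f : ℝ → ℝ) (hv : v ≠ 0) (hω : ω ^ 2 = 1)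
    (k : ℝ × ℝ) :
    chiralPropagator v ω f (chiralRotation v hv k) ^ 2 = -chiralPropagator v ω f k ^ 2 := by
  rw [chiralPropagator_chiralRotation f hv hω, mul_pow, mul_pow, I_sq,
    (by exact_mod_cast hω : (ω : ℂ) ^ 2 = 1)]
  ring

theorem measurable_chiralPropagator {f : ℝ → ℝ} (hf : Measurable f) :
    Measurable (chiralPropagator v ω f) := by
  unfold chiralPropagator chiralRadius chiralSymbol
  fun_prop

theorem norm_chiralPropagator_le {f : ℝ → ℝ} {C r : ℝ} (hω : ω ^ 2 = 1) (hC : ∀ t, |f t| ≤ C)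
    (hr : 0 < r) (hf_small : ∀ t < r, f t = 0) (k : ℝ × ℝ) :
    ‖chiralPropagator v ω f k‖ ≤ C / r := by
  have hC0 : 0 ≤ C := (abs_nonneg _).trans (hC 0)
  rw [chiralPropagator, norm_div, norm_chiralSymbol hω, Complex.norm_real, Real.norm_eq_abs]
  rcases lt_or_ge (chiralRadius v k) r with h | h
  · rw [hf_small _ h, abs_zero, zero_div]
    exact div_nonneg hC0 hr.le
  · exact div_le_div₀ hC0 (hC _) hr h

theorem chiralRadius_le_of_chiralPropagator_ne_zero {f : ℝ → ℝ} {R : ℝ}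
    (hf_large : ∀ t, R < t → f t = 0) {k : ℝ × ℝ} (hk : chiralPropagator v ω f k ≠ 0) :
    chiralRadius v k ≤ R := by
  by_contra! hR
  exact hk (by simp [chiralPropagator, hf_large _ hR])

theorem mem_Icc_prod_Icc_of_chiralRadius_le (hv : 0 < v) {R : ℝ} {k : ℝ × ℝ}
    (hk : chiralRadius v k ≤ R) : k ∈ Set.Icc (-(R / v)) (R / v) ×ˢ Set.Icc (-R) R := by
  have h1 : v * |k.1| ≤ R := by
    rw [← abs_of_pos hv, ← abs_mul]
    exact (abs_mul_fst_le_chiralRadius v k).trans hk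
  exact ⟨abs_le.1 ((le_div_iff₀' hv).2 h1), abs_le.1 ((abs_snd_le_chiralRadius v k).trans hk)⟩

end

theorem chiral_bubble_vanishes_general (v_s : ℝ) (hv : 0 < v_s) (ω : ℝ) (hω : ω = 1 ∨ ω = -1)
    (f : ℝ → ℝ) (hf : Measurable f) (C : ℝ) (hbd : ∀ t, |f t| ≤ C)
    (r R : ℝ) (hr : 0 < r)
    (hsupp : ∀ t : ℝ, t ∉ Set.Icc r R → f t = 0) :
    Integrable (fun k : ℝ × ℝ =>
        ((f (Real.sqrt (k.2 ^ 2 + v_s ^ 2 * k.1 ^ 2)) : ℂ) /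
          (-I * (k.2 : ℂ) + (ω : ℂ) * v_s * k.1)) ^ 2) ∧
    ∫ k : ℝ × ℝ,
        ((f (Real.sqrt (k.2 ^ 2 + v_s ^ 2 * k.1 ^ 2)) : ℂ) /
          (-I * (k.2 : ℂ) + (ω : ℂ) * v_s * k.1)) ^ 2 = 0 := by
  have hω' : ω ^ 2 = 1 := by rcases hω with rfl | rfl <;> norm_num
  have hf_small : ∀ t < r, f t = 0 := fun t ht => hsupp t fun h => ht.not_ge h.1
  have hf_large : ∀ t, R < t → f t = 0 := fun t ht => hsupp t fun h => ht.not_ge h.2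
  change Integrable (fun k => chiralPropagator v_s ω f k ^ 2) ∧
    ∫ k, chiralPropagator v_s ω f k ^ 2 = 0
  constructor
  · refine Integrable.of_norm_le_of_support_subset_isCompact
      ((measurable_chiralPropagator hf).pow_const 2).aestronglyMeasurable (M := (C / r) ^ 2)
      (fun k => ?_) (isCompact_Icc.prod isCompact_Icc) fun k hk =>
        mem_Icc_prod_Icc_of_chiralRadius_le hv
          (chiralRadius_le_of_chiralPropagator_ne_zero hf_large (by simpa using hk))
    rw [norm_pow]
    exact pow_le_pow_left₀ (norm_nonneg _) (norm_chiralPropagator_le hω' hbd hr hf_small k) 2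
  · exact (measurePreserving_chiralRotation v_s hv.ne').integral_eq_zero_of_comp_eq_neg
      (measurableEmbedding_chiralRotation v_s hv.ne')
      (sq_chiralPropagator_chiralRotation f hv.ne' hω')

/-- Vanishing of the chiral bubble at zero momentum: for `v_s > 0`, `ω = ±1`
and `f : ℝ → ℝ` bounded, measurable and vanishing outside an annulus
`0 < r ≤ √(k₀² + v_s² k²) ≤ R`, the square of the propagator
`ĝ_ω(k, k₀) = f(√(k₀² + v_s² k²)) / (-i k₀ + ω v_s k)` is integrable on `ℝ²` and its
integral vanishes. -/
theorem chiral_bubble_vanishes (v_s : ℝ) (hv : 0 < v_s) (ω : ℝ) (hω : ω = 1 ∨ ω = -1)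
    (f : ℝ → ℝ) (hf : Measurable f) (C : ℝ) (hbd : ∀ t, |f t| ≤ C)
    (r R : ℝ) (hr : 0 < r) (hrR : r ≤ R)
    (hsupp : ∀ t : ℝ, t ∉ Set.Icc r R → f t = 0) :
    Integrable (fun k : ℝ × ℝ =>
        ((f (Real.sqrt (k.2 ^ 2 + v_s ^ 2 * k.1 ^ 2)) : ℂ) /
          (-I * (k.2 : ℂ) + (ω : ℂ) * v_s * k.1)) ^ 2) ∧
    ∫ k : ℝ × ℝ,
        ((f (Real.sqrt (k.2 ^ 2 + v_s ^ 2 * k.1 ^ 2)) : ℂ) /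
          (-I * (k.2 : ℂ) + (ω : ℂ) * v_s * k.1)) ^ 2 = 0 :=
  chiral_bubble_vanishes_general v_s hv ω hω f hf C hbd r R hr hsupp
end
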